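/- arXiv:1611.00678 — 7 statements merged into one kernel-verified Lean document; each statement's English description precedes it below -/
import Mathlib

section
/- Let X be a paracompact topological space, Y a real Banach space, and f : X → Y a Baire-1 function. Then there exists a sequence (G_n)_{n=1}^∞ of open strips in X × Y such that ⋂_{n=1}^∞ G_n = gr(f) and for each x ∈ X the diameter of the vertical section G_n(x) tends to 0 as n → ∞. -/
/-!
Write `f` as the pointwise limit of continuous `g n`. Over each `x`, let `G n` be the open ball
around `g n x` of radius `sup_m ‖g (n + m) x - g n x‖ + 1 / (n + 1)`. Balls are convex; the radius
is a supremum of continuous functions, hence lower semicontinuous, which makes `G n` open; `f x`,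
the limit of the `g (n + m) x`, is within the supremum of the centre, hence strictly inside the
ball thanks to the term `1 / (n + 1)`; and the radius tends to `0` because `(g n x)` is Cauchy.
So the sections shrink to `{f x}`.
-/

open Filter Topology Metric
open scoped ENNReal

/-- A function is Baire-1 if it is the pointwise limit of a sequence of continuous functions. -/
def BaireOne {X Y : Type*} [TopologicalSpace X] [TopologicalSpace Y] (f : X → Y) : Prop :=
  ∃ g : ℕ → X → Y, (∀ n, Continuous (g n)) ∧
    ∀ x, Filter.Tendsto (fun n => g n x) Filter.atTop (nhds (f x))

theorem UpperSemicontinuous.isOpen_setOf_lt {α β : Type*} [TopologicalSpace α] [Preorder β]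
    [DenselyOrdered β] {f g : α → β} (hf : UpperSemicontinuous f) (hg : LowerSemicontinuous g) :
    IsOpen {x | f x < g x} := by
  refine isOpen_iff_mem_nhds.2 fun x hx => ?_
  obtain ⟨t, hft, htg⟩ := exists_between hx
  filter_upwards [hf x t hft, hg x t htg] with y hfy hgy using hfy.trans hgy

theorem hasOpenCGraph_eball {X E : Type*} [TopologicalSpace X] [PseudoEMetricSpace E]
    {c : X → E} {r : X → ℝ≥0∞} (hc : Continuous c) (hr : LowerSemicontinuous r) :
    HasOpenCGraph fun x => eball (c x) (r x) :=
  UpperSemicontinuous.isOpen_setOf_lt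
    (continuous_snd.edist (hc.comp continuous_fst)).upperSemicontinuous
    (hr.comp continuous_fst)

section Tail

variable {E : Type*} [PseudoEMetricSpace E] {u : ℕ → E}

theorem CauchySeq.tendsto_iSup_edist_add (hu : CauchySeq u) :
    Tendsto (fun n => ⨆ m, edist (u (n + m)) (u n)) atTop (𝓝 0) := by
  refine ENNReal.tendsto_atTop_zero.2 fun ε hε => ?_
  obtain ⟨N, hN⟩ := EMetric.cauchySeq_iff.1 hu ε hε
  exact ⟨N, fun n hn => iSup_le fun m => (hN _ (by omega) n hn).le⟩

theorem edist_le_iSup_edist_add_of_tendsto {a : E} (hu : Tendsto u atTop (𝓝 a)) (n : ℕ) :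
    edist a (u n) ≤ ⨆ m, edist (u (n + m)) (u n) :=
  le_of_tendsto' (((tendsto_add_atTop_iff_nat n).2 hu).edist tendsto_const_nhds) fun m =>
    add_comm n m ▸ le_iSup (fun m => edist (u (n + m)) (u n)) m

end Tail

theorem iInter_eq_singleton_of_tendsto_ediam {ι E : Type*} [EMetricSpace E] {l : Filter ι}
    [l.NeBot] {s : ι → Set E} {a : E} (ha : ∀ i, a ∈ s i)
    (hs : Tendsto (fun i => ediam (s i)) l (𝓝 0)) : ⋂ i, s i = {a} := by
  refine Set.Subset.antisymm (fun y hy => ?_) (Set.singleton_subset_iff.2 (Set.mem_iInter.2 ha))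
  have hle : edist y a ≤ 0 :=
    ge_of_tendsto' hs fun i => edist_le_ediam_of_mem (Set.mem_iInter.1 hy i) (ha i)
  exact edist_le_zero.1 hle

section StripRadius

variable {X E : Type*} [PseudoMetricSpace E] {g : ℕ → X → E}

noncomputable def stripRadius (g : ℕ → X → E) (n : ℕ) (x : X) : ℝ≥0∞ :=
  (⨆ m, edist (g (n + m) x) (g n x)) + (n + 1 : ℝ≥0∞)⁻¹

theorem lowerSemicontinuous_stripRadius [TopologicalSpace X] (hg : ∀ n, Continuous (g n))
    (n : ℕ) :
    LowerSemicontinuous (stripRadius g n) :=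
  (lowerSemicontinuous_iSup fun m => ((hg (n + m)).edist (hg n)).lowerSemicontinuous).add
    lowerSemicontinuous_const

theorem tendsto_stripRadius {x : X} {a : E} (hx : Tendsto (fun n => g n x) atTop (𝓝 a)) :
    Tendsto (fun n => stripRadius g n x) atTop (𝓝 0) := by
  have hinv : Tendsto (fun n : ℕ => (n + 1 : ℝ≥0∞)⁻¹) atTop (𝓝 0) := by
    simpa [Function.comp_def] using
      ENNReal.tendsto_inv_nat_nhds_zero.comp (tendsto_add_atTop_nat 1)
  simpa [stripRadius] using hx.cauchySeq.tendsto_iSup_edist_add.add hinv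

theorem mem_eball_stripRadius {x : X} {a : E} (hx : Tendsto (fun n => g n x) atTop (𝓝 a))
    (n : ℕ) : a ∈ eball (g n x) (stripRadius g n x) :=
  calc edist a (g n x)
      < edist a (g n x) + (n + 1 : ℝ≥0∞)⁻¹ :=
        ENNReal.lt_add_right (edist_ne_top _ _) (by simp)
    _ ≤ stripRadius g n x := add_le_add (edist_le_iSup_edist_add_of_tendsto hx n) le_rfl

end StripRadius

theorem baire_one_graph_open_strips_general
    {X Y : Type*} [TopologicalSpace X]
    [NormedAddCommGroup Y] [NormedSpace ℝ Y]
    (f : X → Y) (hf : BaireOne f) :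
    ∃ G : ℕ → Set (X × Y),
      (∀ n, IsOpen (G n)) ∧
      (∀ n, ∀ x : X, Convex ℝ {y : Y | (x, y) ∈ G n}) ∧
      (⋂ n, G n) = {p : X × Y | p.2 = f p.1} ∧
      (∀ x : X,
        Tendsto (fun n => EMetric.diam {y : Y | (x, y) ∈ G n}) atTop (𝓝 0)) := by
  obtain ⟨g, hg, hgf⟩ := hf
  have hdiam : ∀ x, Tendsto (fun n => ediam (eball (g n x) (stripRadius g n x))) atTop (𝓝 0) :=
    fun x => tendsto_of_tendsto_of_tendsto_of_le_of_le tendsto_const_nhds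
      (by simpa using ENNReal.Tendsto.const_mul (tendsto_stripRadius (hgf x)) (by simp))
      (fun _ => zero_le) fun _ => ediam_eball_le
  refine ⟨fun n => {p | p.2 ∈ eball (g n p.1) (stripRadius g n p.1)},
    fun n => hasOpenCGraph_eball (hg n) (lowerSemicontinuous_stripRadius hg n),
    fun n x => convex_eball (g n x) (stripRadius g n x), ?_, hdiam⟩
  ext ⟨x, y⟩
  simpa using Set.ext_iff.1
    (iInter_eq_singleton_of_tendsto_ediam (mem_eball_stripRadius (hgf x)) (hdiam x)) y

/-- If `X` is a paracompact topological space, `Y` a real Banach space, and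
`f : X → Y` is Baire-1, then there is a sequence of open strips in `X × Y` whose
intersection is the graph of `f` and whose vertical sections above each `x` have
diameter tending to `0`. -/
theorem baire_one_graph_open_strips
    {X Y : Type*} [TopologicalSpace X] [ParacompactSpace X]
    [NormedAddCommGroup Y] [NormedSpace ℝ Y] [CompleteSpace Y]
    (f : X → Y) (hf : BaireOne f) :
    ∃ G : ℕ → Set (X × Y),
      (∀ n, IsOpen (G n)) ∧
      (∀ n, ∀ x : X, Convex ℝ {y : Y | (x, y) ∈ G n}) ∧
      (⋂ n, G n) = {p : X × Y | p.2 = f p.1} ∧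
      (∀ x : X,
        Tendsto (fun n => EMetric.diam {y : Y | (x, y) ∈ G n}) atTop (𝓝 0)) :=
  baire_one_graph_open_strips_general f hf
end

section
/- Let X be a topological space, Y a metric space, α a countable ordinal, and f : X → Y a Baire-α function. Then for every open set G ⊆ Y the preimage f⁻¹(G) ⊆ X is a set of additive Borel class α+1 (a Σ_{α+1} set). In other words, every Baire-α function is a Borel-(α+1) mapping. -/
open Filter Topology

/-- The Baire hierarchy: `IsBaireClass 0 f` iff `f` is continuous, and for a (countable)
ordinal `α > 0`, `IsBaireClass α f` iff `f` is the pointwise limit of a sequence of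
functions, the `n`-th of which is of Baire class `β n` for some `β n < α`. -/
inductive IsBaireClass {X Y : Type*} [TopologicalSpace X] [TopologicalSpace Y] :
    Ordinal → (X → Y) → Prop
  | cont (f : X → Y) : Continuous f → IsBaireClass 0 f
  | lim (α : Ordinal) (f : X → Y) (g : ℕ → X → Y) (β : ℕ → Ordinal) :
      0 < α → (∀ n, β n < α) → (∀ n, IsBaireClass (β n) (g n)) →
      (∀ x, Filter.Tendsto (fun n => g n x) Filter.atTop (nhds (f x))) →
      IsBaireClass α f

/-- The additive Borel classes: `IsSigmaClass 1 s` iff `s` is open, and for an ordinal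
`α > 1`, `IsSigmaClass α s` iff `s` is a countable union of sets, the `n`-th of which
is of multiplicative class `β n` (i.e. its complement is of additive class `β n`)
for some `β n < α`. -/
inductive IsSigmaClass {X : Type*} [TopologicalSpace X] : Ordinal → Set X → Prop
  | open_ (s : Set X) : IsOpen s → IsSigmaClass 1 s
  | union (α : Ordinal) (s : ℕ → Set X) (β : ℕ → Ordinal) :
      1 < α → (∀ n, β n < α) → (∀ n, IsSigmaClass (β n) (s n)ᶜ) →
      IsSigmaClass α (⋃ n, s n)

/-- `s` is of multiplicative class `α` iff its complement is of additive class `α`. -/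
def IsPiClass {X : Type*} [TopologicalSpace X] (α : Ordinal) (s : Set X) : Prop :=
  IsSigmaClass α sᶜ


/-!
If `f` is the pointwise limit of `gₙ` and `G = ⋃ₘ Uₘ` with `Uₘ` open and `closure Uₘ ⊆ G`
(possible in any perfectly normal space, in particular in a metric space), then
`f⁻¹(G) = ⋃_{m,N} ⋂_{n ≥ N} gₙ⁻¹(closure Uₘ)`. By induction on `α`, each `gₙ⁻¹(closure Uₘ)` is
multiplicative of a class `< α + 1`, so each intersection is `Π_α` and the union is `Σ_{α+1}`.
-/

open Set

section BorelClass

variable {X : Type*} [TopologicalSpace X]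

theorem isSigmaClass_one_iff {s : Set X} : IsSigmaClass 1 s ↔ IsOpen s := by
  constructor
  · rintro (⟨_, hs⟩ | ⟨_, _, _, h, _⟩)
    · exact hs
    · exact absurd h (lt_irrefl 1)
  · exact IsSigmaClass.open_ s

theorem isPiClass_one_iff {s : Set X} : IsPiClass 1 s ↔ IsClosed s := by
  rw [IsPiClass, isSigmaClass_one_iff, isOpen_compl_iff]

theorem IsSigmaClass.exists_iUnion_isPiClass {α : Ordinal} {s : Set X} (hα : 1 < α)
    (hs : IsSigmaClass α s) :
    ∃ (t : ℕ → Set X) (β : ℕ → Ordinal),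
      (∀ n, β n < α) ∧ (∀ n, IsPiClass (β n) (t n)) ∧ s = ⋃ n, t n := by
  cases hs with
  | open_ => exact absurd hα (lt_irrefl 1)
  | union _ t β _ hβ ht => exact ⟨t, β, hβ, ht, rfl⟩

theorem IsSigmaClass.iUnion_of_isPiClass {ι : Type*} [Countable ι] [Nonempty ι] {α : Ordinal}
    (hα : 1 < α) {t : ι → Set X} {β : ι → Ordinal} (hβ : ∀ i, β i < α)
    (ht : ∀ i, IsPiClass (β i) (t i)) : IsSigmaClass α (⋃ i, t i) := by
  obtain ⟨e, he⟩ := exists_surjective_nat ι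
  rw [← he.iUnion_comp]
  exact IsSigmaClass.union α (t ∘ e) (β ∘ e) hα (fun n => hβ _) (fun n => ht _)

theorem IsSigmaClass.iUnion {ι : Type*} [Countable ι] [Nonempty ι] {α : Ordinal} (hα : 1 < α)
    {s : ι → Set X} {β : ι → Ordinal} (hβ₁ : ∀ i, 1 < β i) (hβα : ∀ i, β i ≤ α)
    (hs : ∀ i, IsSigmaClass (β i) (s i)) : IsSigmaClass α (⋃ i, s i) := by
  choose t γ hγ ht hst using fun i => (hs i).exists_iUnion_isPiClass (hβ₁ i)
  rw [iUnion_congr hst, ← iUnion_prod' fun p : ι × ℕ => t p.1 p.2]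
  exact iUnion_of_isPiClass hα (fun p => (hγ p.1 p.2).trans_le (hβα p.1)) fun p => ht p.1 p.2

theorem IsPiClass.iInter {ι : Type*} [Countable ι] [Nonempty ι] {α : Ordinal} (hα : 1 < α)
    {t : ι → Set X} {β : ι → Ordinal} (hβ₁ : ∀ i, 1 < β i) (hβα : ∀ i, β i ≤ α)
    (ht : ∀ i, IsPiClass (β i) (t i)) : IsPiClass α (⋂ i, t i) := by
  rw [IsPiClass, compl_iInter]
  exact IsSigmaClass.iUnion hα hβ₁ hβα ht

end BorelClass

section BaireClass

variable {X Y : Type*} [TopologicalSpace X] [TopologicalSpace Y]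

theorem isBaireClass_zero_iff {f : X → Y} : IsBaireClass 0 f ↔ Continuous f := by
  constructor
  · rintro (⟨_, hf⟩ | ⟨_, _, _, _, h, _⟩)
    · exact hf
    · exact absurd h (lt_irrefl 0)
  · exact IsBaireClass.cont f

theorem IsBaireClass.mono {β γ : Ordinal} (hβγ : β ≤ γ) {f : X → Y} (hf : IsBaireClass β f) :
    IsBaireClass γ f := by
  rcases hβγ.eq_or_lt with rfl | hlt
  · exact hf
  · exact IsBaireClass.lim γ f (fun _ => f) (fun _ => β) (pos_of_gt hlt)
      (fun _ => hlt) (fun _ => hf) (fun _ => tendsto_const_nhds)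

end BaireClass

theorem IsOpen.exists_iUnion_isOpen_closure_subset {Y : Type*} [TopologicalSpace Y]
    [PerfectlyNormalSpace Y] {G : Set Y} (hG : IsOpen G) :
    ∃ U : ℕ → Set Y, (∀ m, IsOpen (U m)) ∧ (∀ m, closure (U m) ⊆ G) ∧ G ⊆ ⋃ m, U m := by
  obtain ⟨V, hVo, hGV⟩ := isGδ_iff_eq_iInter_nat.1 hG.isClosed_compl.isGδ
  have hVG : ∀ m, (V m)ᶜ ⊆ G := fun m => compl_subset_comm.1 (hGV ▸ iInter_subset V m)
  choose U hUo hVU hUG using fun m =>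
    normal_exists_closure_subset (hVo m).isClosed_compl hG (hVG m)
  refine ⟨U, hUo, hUG, fun y hy => ?_⟩
  obtain ⟨m, hm⟩ : ∃ m, y ∉ V m := by
    simpa [← not_forall, ← mem_iInter, ← hGV] using hy
  exact mem_iUnion.2 ⟨m, hVU m hm⟩

theorem preimage_eq_iUnion_iInter_preimage_closure_of_tendsto {X Y : Type*}
    [TopologicalSpace Y] {G : Set Y} {U : ℕ → Set Y} (hUo : ∀ m, IsOpen (U m))
    (hUG : ∀ m, closure (U m) ⊆ G) (hGU : G ⊆ ⋃ m, U m) {f : X → Y} {g : ℕ → X → Y}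
    (hlim : ∀ x, Tendsto (fun n => g n x) atTop (𝓝 (f x))) :
    f ⁻¹' G = ⋃ p : ℕ × ℕ, ⋂ n, g (n + p.2) ⁻¹' closure (U p.1) := by
  ext x
  simp only [mem_preimage, mem_iUnion, mem_iInter, Prod.exists]
  constructor
  · intro hx
    obtain ⟨m, hm⟩ := mem_iUnion.1 (hGU hx)
    obtain ⟨N, hN⟩ := eventually_atTop.1 ((hlim x).eventually ((hUo m).mem_nhds hm))
    exact ⟨m, N, fun n => subset_closure (hN _ (Nat.le_add_left N n))⟩
  · rintro ⟨m, N, hx⟩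
    exact hUG m <| isClosed_closure.mem_of_tendsto ((tendsto_add_atTop_iff_nat N).2 (hlim x))
      (Eventually.of_forall hx)

theorem IsBaireClass.preimage_isSigmaClass_succ {X Y : Type*} [TopologicalSpace X]
    [TopologicalSpace Y] [PerfectlyNormalSpace Y] {α : Ordinal} {f : X → Y}
    (hf : IsBaireClass α f) {G : Set Y} (hG : IsOpen G) : IsSigmaClass (α + 1) (f ⁻¹' G) := by
  induction α using WellFoundedLT.induction generalizing f G with | _ α IH =>
  cases hf with
  | cont f hf => simpa using IsSigmaClass.open_ _ (hG.preimage hf)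
  | lim α f g β hα hβ hg hlim =>
    obtain ⟨U, hUo, hUG, hGU⟩ := hG.exists_iUnion_isOpen_closure_subset
    rw [preimage_eq_iUnion_iInter_preimage_closure_of_tendsto hUo hUG hGU hlim]
    have hα_succ : α < α + 1 := Order.lt_add_one_iff.2 le_rfl
    refine IsSigmaClass.iUnion_of_isPiClass ((Order.one_le_iff_pos.2 hα).trans_lt hα_succ)
      (fun _ => hα_succ) fun ⟨m, N⟩ => ?_
    rcases (Order.one_le_iff_pos.2 hα).eq_or_lt with rfl | h1α
    · have hgc : ∀ n, Continuous (g n) := fun n =>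
        isBaireClass_zero_iff.1 (Order.lt_one_iff.1 (hβ n) ▸ hg n)
      exact isPiClass_one_iff.2 <| isClosed_iInter fun n => isClosed_closure.preimage (hgc _)
    · -- a continuous `gₙ` is treated as Baire-1, since `Σ_2` need not contain the open sets
      have hγα : ∀ n, max 1 (β n) < α := fun n => max_lt h1α (hβ n)
      refine IsPiClass.iInter h1α (β := fun n => max 1 (β (n + N)) + 1)
        (fun n => Order.lt_add_one_iff.2 (le_max_left _ _))
        (fun n => Order.add_one_le_iff.2 (hγα _)) fun n => ?_
      rw [IsPiClass, ← preimage_compl]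
      exact IH _ (hγα _) ((hg _).mono (le_max_right _ _)) isClosed_closure.isOpen_compl

theorem preimage_isSigmaClass_succ_of_isBaireClass_general
    {X Y : Type*} [TopologicalSpace X] [MetricSpace Y]
    (α : Ordinal)
    (f : X → Y) (hf : IsBaireClass α f)
    (G : Set Y) (hG : IsOpen G) :
    IsSigmaClass (α + 1) (f ⁻¹' G) :=
  hf.preimage_isSigmaClass_succ hG

/-- Every Baire-`α` function from a topological space to a metric space is a
Borel-`(α+1)` mapping: preimages of open sets are of additive class `α + 1`. -/
theorem preimage_isSigmaClass_succ_of_isBaireClass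
    {X Y : Type*} [TopologicalSpace X] [MetricSpace Y]
    (α : Ordinal) (hα : α.card ≤ Cardinal.aleph0)
    (f : X → Y) (hf : IsBaireClass α f)
    (G : Set Y) (hG : IsOpen G) :
    IsSigmaClass (α + 1) (f ⁻¹' G) :=
  preimage_isSigmaClass_succ_of_isBaireClass_general α f hf G hG
end

section
/- Let X be a topological space, Y a metric space, and f : X → Y a Baire-1 function. Then for every open set G ⊆ Y the preimage f⁻¹(G) is an Fσ subset of X, i.e., a countable union of closed sets. -/
open Filter Topology

/-!
Write the open set `G` as a countable union of closed sets `C k` such that every `y ∈ G` has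
some `C k` as a neighbourhood (in a metric space, `C k = {y | 1/k ≤ d(y, Gᶜ)}`).
If `g n → f` pointwise, then `f x ∈ G` exactly when `g n x` eventually stays in one `C k`:
neighbourhoods are eventually entered, and closed sets keep limits. The set of `x` with
`g n x ∈ C k` for all `n ≥ N` is closed when the `g n` are continuous, so `f ⁻¹' G` is a union
of closed sets indexed by `(k, N)`.
-/

open Set Metric
open scoped ENNReal

def IsFSigma {X : Type*} [TopologicalSpace X] (s : Set X) : Prop :=
  ∃ F : ℕ → Set X, (∀ n, IsClosed (F n)) ∧ s = ⋃ n, F n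

section

variable {X : Type*} [TopologicalSpace X]

theorem isFSigma_iUnion {s : ℕ → Set X} (hs : ∀ k, IsFSigma (s k)) : IsFSigma (⋃ k, s k) := by
  choose F hF hsF using hs
  refine ⟨fun m => F m.unpair.1 m.unpair.2, fun m => hF _ _, ?_⟩
  rw [iUnion_unpair F]
  exact iUnion_congr hsF

theorem isFSigma_setOf_eventually_mem {Y : Type*} [TopologicalSpace Y] {g : ℕ → X → Y}
    (hg : ∀ n, Continuous (g n)) {C : Set Y} (hC : IsClosed C) :
    IsFSigma {x | ∀ᶠ n in atTop, g n x ∈ C} := by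
  refine ⟨fun N => ⋂ n ∈ Ici N, g n ⁻¹' C,
    fun N => isClosed_biInter fun n _ => hC.preimage (hg n), ?_⟩
  ext x
  simp only [mem_ofPred_eq, eventually_atTop, mem_iUnion, mem_iInter, mem_preimage, mem_Ici]

end

theorem preimage_eq_iUnion_setOf_eventually_mem {ι X Y : Type*} [TopologicalSpace Y]
    {l : Filter ι} [l.NeBot] {g : ι → X → Y} {f : X → Y}
    (hfg : ∀ x, Tendsto (fun n => g n x) l (𝓝 (f x))) {G : Set Y} {C : ℕ → Set Y}
    (hC : ∀ k, IsClosed (C k)) (hCG : ∀ k, C k ⊆ G) (hGC : ∀ y ∈ G, ∃ k, C k ∈ 𝓝 y) :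
    f ⁻¹' G = ⋃ k, {x | ∀ᶠ n in l, g n x ∈ C k} := by
  ext x
  simp only [mem_preimage, mem_iUnion, mem_ofPred_eq]
  constructor
  · intro hx
    obtain ⟨k, hk⟩ := hGC (f x) hx
    exact ⟨k, hfg x hk⟩
  · rintro ⟨k, hk⟩
    exact hCG k ((hC k).mem_of_tendsto (hfg x) hk)

theorem IsOpen.exists_isClosed_subset_mem_nhds {Y : Type*} [PseudoEMetricSpace Y] {G : Set Y}
    (hG : IsOpen G) :
    ∃ C : ℕ → Set Y, (∀ k, IsClosed (C k)) ∧ (∀ k, C k ⊆ G) ∧ ∀ y ∈ G, ∃ k, C k ∈ 𝓝 y := by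
  refine ⟨fun k => {y | (k : ℝ≥0∞)⁻¹ ≤ infEDist y Gᶜ},
    fun k => isClosed_le continuous_const continuous_infEDist, ?_, ?_⟩
  · intro k y hy
    by_contra hyG
    have hpos : 0 < infEDist y Gᶜ :=
      (ENNReal.inv_pos.2 (ENNReal.natCast_ne_top k)).trans_le hy
    exact hpos.ne' (infEDist_zero_of_mem hyG)
  · intro y hy
    have hpos : 0 < infEDist y Gᶜ := by
      rwa [infEDist_pos_iff_notMem_closure, hG.isClosed_compl.closure_eq, notMem_compl_iff]
    obtain ⟨k, hk⟩ := ENNReal.exists_inv_nat_lt hpos.ne'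
    exact ⟨k, mem_of_superset ((isOpen_lt continuous_const continuous_infEDist).mem_nhds hk)
      (ofPred_subset_ofPred.2 fun z => le_of_lt)⟩

/-- For a Baire-1 function from a topological space to a metric space, the
preimage of every open set is an Fσ set, i.e. a countable union of closed sets. -/
theorem preimage_isFSigma_of_baireOne
    {X Y : Type*} [TopologicalSpace X] [MetricSpace Y]
    (f : X → Y) (hf : BaireOne f) (G : Set Y) (hG : IsOpen G) :
    ∃ F : ℕ → Set X, (∀ n, IsClosed (F n)) ∧ f ⁻¹' G = ⋃ n, F n := by
  obtain ⟨g, hg, hfg⟩ := hf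
  obtain ⟨C, hC, hCG, hGC⟩ := hG.exists_isClosed_subset_mem_nhds
  rw [preimage_eq_iUnion_setOf_eventually_mem hfg hC hCG hGC]
  exact isFSigma_iUnion fun k => isFSigma_setOf_eventually_mem hg (hC k)
end

section
/- Let X be a topological space, Y a metric space, and f : X → Y a Baire-2 function. Then for every open set G ⊆ Y the preimage f⁻¹(G) is a countable union of Gδ subsets of X. -/
/-! In a perfectly normal space (e.g. a metric space) every closed set `C` is `⋂ k, V k` for open
`V k` whose closures still intersect to `C`. Hence, if `u n → f` pointwise, `f x ∈ C` iff for
every `k` the sequence `u n x` lies frequently in `V k`. For continuous `u n` this makes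
`f ⁻¹' C` a Gδ set, so Baire-1 preimages of closed sets are Gδ. For a Baire-2 `f = lim u n` and
open `G`, the same criterion with `C = Gᶜ` gives `f ⁻¹' G = ⋃ k, ⋃ N, ⋂ n ≥ N, u n ⁻¹' (V k)ᶜ`,
a countable union of Gδ sets. -/

open Filter Topology Set

/-- A function is Baire-2 if it is the pointwise limit of a sequence of Baire-1 functions. -/
def BaireTwo {X Y : Type*} [TopologicalSpace X] [TopologicalSpace Y] (f : X → Y) : Prop :=
  ∃ g : ℕ → X → Y, (∀ n, BaireOne (g n)) ∧
    ∀ x, Filter.Tendsto (fun n => g n x) Filter.atTop (nhds (f x))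

theorem IsClosed.exists_iInter_closure_subset {Y : Type*} [TopologicalSpace Y]
    [PerfectlyNormalSpace Y] {C : Set Y} (hC : IsClosed C) :
    ∃ V : ℕ → Set Y, (∀ k, IsOpen (V k)) ∧ (∀ k, C ⊆ V k) ∧ ⋂ k, closure (V k) ⊆ C := by
  obtain ⟨U, hUo, rfl⟩ := (PerfectlyNormalSpace.closed_gdelta hC).eq_iInter_nat
  choose V hVo hCV hVU using fun k ↦
    normal_exists_closure_subset hC (hUo k) (iInter_subset U k)
  exact ⟨V, hVo, hCV, iInter_mono hVU⟩

theorem preimage_eq_iInter_setOf_frequently_mem {X Y ι : Type*} [TopologicalSpace Y]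
    {u : ℕ → X → Y} {f : X → Y} (hu : ∀ x, Tendsto (u · x) atTop (𝓝 (f x)))
    {C : Set Y} {V : ι → Set Y} (hVo : ∀ k, IsOpen (V k)) (hCV : ∀ k, C ⊆ V k)
    (hVC : ⋂ k, closure (V k) ⊆ C) :
    f ⁻¹' C = ⋂ k, {x | ∃ᶠ n in atTop, u n x ∈ V k} := by
  ext x
  simp only [mem_preimage, mem_iInter]
  refine ⟨fun hx k ↦ ((hu x).eventually_mem ((hVo k).mem_nhds (hCV k hx))).frequently,
    fun hx ↦ hVC <| mem_iInter.2 fun k ↦ mem_closure_of_frequently_of_tendsto (hx k) (hu x)⟩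

theorem isGδ_setOf_frequently_mem {X Y : Type*} [TopologicalSpace X] [TopologicalSpace Y]
    {u : ℕ → X → Y} (hu : ∀ n, Continuous (u n)) {U : Set Y} (hU : IsOpen U) :
    IsGδ {x | ∃ᶠ n in atTop, u n x ∈ U} := by
  have : {x | ∃ᶠ n in atTop, u n x ∈ U} = ⋂ N, ⋃ n ≥ N, u n ⁻¹' U := by
    ext x
    simp [frequently_atTop]
  rw [this]
  exact .iInter_of_isOpen fun N ↦ isOpen_biUnion fun n _ ↦ hU.preimage (hu n)

theorem BaireOne.isGδ_preimage {X Y : Type*} [TopologicalSpace X] [TopologicalSpace Y]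
    [PerfectlyNormalSpace Y] {g : X → Y} (hg : BaireOne g) {C : Set Y} (hC : IsClosed C) :
    IsGδ (g ⁻¹' C) := by
  obtain ⟨u, hu, hlim⟩ := hg
  obtain ⟨V, hVo, hCV, hVC⟩ := hC.exists_iInter_closure_subset
  rw [preimage_eq_iInter_setOf_frequently_mem hlim hVo hCV hVC]
  exact .iInter fun k ↦ isGδ_setOf_frequently_mem hu (hVo k)

/-- For a Baire-2 function from a topological space to a metric space, the
preimage of every open set is a countable union of Gδ sets. -/
theorem preimage_unionGdelta_of_baireTwo
    {X Y : Type*} [TopologicalSpace X] [MetricSpace Y]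
    (f : X → Y) (hf : BaireTwo f) (G : Set Y) (hG : IsOpen G) :
    ∃ S : ℕ → Set X, (∀ n, IsGδ (S n)) ∧ f ⁻¹' G = ⋃ n, S n := by
  obtain ⟨u, hu, hlim⟩ := hf
  obtain ⟨V, hVo, hGV, hVG⟩ := hG.isClosed_compl.exists_iInter_closure_subset
  have hpre : f ⁻¹' G = ⋃ k, ⋃ N, ⋂ n ≥ N, u n ⁻¹' (V k)ᶜ := by
    rw [← compl_compl G, preimage_compl,
      preimage_eq_iInter_setOf_frequently_mem hlim hVo hGV hVG]
    ext x
    simp [not_frequently, eventually_atTop]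
  refine ⟨fun n ↦ ⋂ m ≥ n.unpair.2, u m ⁻¹' (V n.unpair.1)ᶜ, fun n ↦ ?_, ?_⟩
  · exact .biInter (to_countable _) fun m _ ↦ (hu m).isGδ_preimage (hVo _).isClosed_compl
  · rw [hpre, iUnion_unpair (fun k N ↦ ⋂ m ≥ N, u m ⁻¹' (V k)ᶜ)]
end

section
/- Let X be a topological space, Y a metric space, α a countable ordinal, and f : X → Y a Baire-α function. Then there exists a sequence (G_n)_{n=1}^∞ of Σ_α sets in X × Y such that ⋂_{n=1}^∞ G_n = gr(f) and for each x ∈ X the diameter of the vertical section G_n(x) = {y ∈ Y : (x, y) ∈ G_n} tends to 0 as n → ∞. -/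
open Filter Topology

/-!
Write `f = lim gₙ` with `gₙ` of Baire class `βₙ < α`. The functions `φₙ (x, y) = dist (gₙ x) y`
on `X × Y` are of Baire class `βₙ`. By induction on the Baire class, for a Baire-`β` function `φ`
and `a < b` there is a `Σ_γ` set between `{φ < a}` and `{φ < b}` for every `γ > β`: at a limit
`φ = lim φₖ` take `liminf Tₖ`, where `Tₖ` is a `Π_γ` set between `{φₖ ≤ a}` and `{φₖ ≤ c}` for
some `a < c < b`; such a liminf is `Σ_{γ'}` for all `γ' > γ`. With `rₘ → 0`, the union over
`n ≥ m` of `Σ_α` sets between `{φₙ < rₘ / 2}` and `{φₙ < rₘ}` contains the graph of `f`, and its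
section above `x` lies within `rₘ + sup_{n ≥ m} dist (gₙ x) (f x)` of `f x`.
-/

open Set Metric

section BorelClasses

variable {Z : Type*} [TopologicalSpace Z] {γ γ' : Ordinal} {s : Set Z}

theorem IsSigmaClass.one_le (h : IsSigmaClass γ s) : 1 ≤ γ := by
  cases h with
  | open_ => exact le_rfl
  | union _ _ _ h1 => exact h1.le

theorem IsPiClass.one_le (h : IsPiClass γ s) : 1 ≤ γ :=
  IsSigmaClass.one_le h

theorem IsSigmaClass.isOpen (h : IsSigmaClass 1 s) : IsOpen s := by
  cases h with
  | open_ _ hs => exact hs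
  | union _ _ _ h1 => exact absurd h1 (lt_irrefl 1)

theorem IsClosed.isPiClass_one (hs : IsClosed s) : IsPiClass 1 s :=
  .open_ _ hs.isOpen_compl

theorem IsSigmaClass.isPiClass_compl (h : IsSigmaClass γ s) : IsPiClass γ sᶜ := by
  rwa [IsPiClass, compl_compl]

theorem IsSigmaClass.exists_eq_iUnion_isPiClass (h : IsSigmaClass γ s) (hγ : 1 < γ) :
    ∃ (t : ℕ → Set Z) (ρ : ℕ → Ordinal),
      (∀ n, ρ n < γ) ∧ (∀ n, IsPiClass (ρ n) (t n)) ∧ s = ⋃ n, t n := by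
  cases h with
  | open_ => exact absurd hγ (lt_irrefl 1)
  | union _ t ρ _ hρ ht => exact ⟨t, ρ, hρ, ht, rfl⟩

theorem isSigmaClass_iUnion_of_isPiClass {ι : Type*} [Countable ι] [Nonempty ι]
    {t : ι → Set Z} {ρ : ι → Ordinal} (hρ : ∀ i, ρ i < γ) (ht : ∀ i, IsPiClass (ρ i) (t i)) :
    IsSigmaClass γ (⋃ i, t i) := by
  obtain ⟨e, he⟩ := exists_surjective_nat ι
  rw [← he.iUnion_comp]
  exact .union γ _ _ ((ht (e 0)).one_le.trans_lt (hρ (e 0))) (fun n => hρ (e n)) fun n => ht (e n)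

theorem IsPiClass.isSigmaClass_of_lt {β : Ordinal} (h : IsPiClass β s) (hβγ : β < γ) :
    IsSigmaClass γ s := by
  have := isSigmaClass_iUnion_of_isPiClass (ι := Unit) (fun _ => hβγ) fun _ => h
  rwa [iUnion_const] at this

theorem IsSigmaClass.iUnion_s7 {ι : Type*} [Countable ι] [Nonempty ι] {s : ι → Set Z}
    (h : ∀ i, IsSigmaClass γ (s i)) : IsSigmaClass γ (⋃ i, s i) := by
  rcases (h (Classical.arbitrary ι)).one_le.eq_or_lt with rfl | hγ
  · exact .open_ _ (isOpen_iUnion fun i => (h i).isOpen)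
  · choose t ρ hρ ht hst using fun i => (h i).exists_eq_iUnion_isPiClass hγ
    rw [iUnion_congr hst, ← iUnion_prod' fun p : ι × ℕ => t p.1 p.2]
    exact isSigmaClass_iUnion_of_isPiClass (fun p => hρ p.1 p.2) fun p => ht p.1 p.2

theorem IsPiClass.iInter_s7 {ι : Type*} [Countable ι] [Nonempty ι] {t : ι → Set Z}
    (h : ∀ i, IsPiClass γ (t i)) : IsPiClass γ (⋂ i, t i) := by
  rw [IsPiClass, compl_iInter]
  exact IsSigmaClass.iUnion_s7 h

theorem isSigmaClass_liminf {t : ℕ → Set Z} (ht : ∀ k, IsPiClass γ (t k)) (hγ : γ < γ') :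
    IsSigmaClass γ' (liminf t atTop) := by
  rw [liminf_eq_iSup_iInf_of_nat']
  exact isSigmaClass_iUnion_of_isPiClass (fun _ => hγ) fun n => IsPiClass.iInter_s7 fun i => ht _

end BorelClasses

section BaireClasses

variable {X Y W : Type*} [TopologicalSpace X] [TopologicalSpace Y] [TopologicalSpace W]
  {γ : Ordinal}

theorem Continuous.comp_isBaireClass {g : X → Y} {h : Y → W} (hh : Continuous h)
    (hg : IsBaireClass γ g) : IsBaireClass γ (h ∘ g) := by
  induction hg with
  | cont g hg => exact .cont _ (hh.comp hg)
  | lim γ g gs β hγ hβ _ hlim ih =>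
    exact .lim γ _ _ β hγ hβ ih fun x => (hh.tendsto _).comp (hlim x)

theorem IsBaireClass.prodMap_id {g : X → Y} (hg : IsBaireClass γ g) :
    IsBaireClass γ (Prod.map g (id : W → W)) := by
  induction hg with
  | cont g hg => exact .cont _ (hg.prodMap continuous_id)
  | lim γ g gs β hγ hβ _ hlim ih =>
    exact .lim γ _ _ β hγ hβ ih fun p => (hlim p.1).prodMk_nhds tendsto_const_nhds

end BaireClasses

section Sublevels

variable {Z : Type*} [TopologicalSpace Z] {γ : Ordinal}

/-- A substitute for "`{φ < a}` is `Σ_{γ+1}`", which fails already for continuous `φ`: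
open sets need not be countable unions of closed sets. -/
def SigmaSeparatesSublevels (γ : Ordinal) (φ : Z → ℝ) : Prop :=
  ∀ γ', γ < γ' → ∀ a b : ℝ, a < b →
    ∃ S : Set Z, IsSigmaClass γ' S ∧ {z | φ z < a} ⊆ S ∧ S ⊆ {z | φ z < b}

theorem Continuous.sigmaSeparatesSublevels {φ : Z → ℝ} (hφ : Continuous φ) :
    SigmaSeparatesSublevels 0 φ := by
  intro γ' hγ' a b hab
  rcases (Order.one_le_iff_pos.2 hγ').eq_or_lt with rfl | hγ'
  · exact ⟨_, .open_ _ (isOpen_lt hφ continuous_const), fun z hz => hz.trans hab, subset_rfl⟩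
  · obtain ⟨c, hac, hcb⟩ := exists_between hab
    exact ⟨{z | φ z ≤ c}, (isClosed_le hφ continuous_const).isPiClass_one.isSigmaClass_of_lt hγ',
      fun z hz => (hz.trans hac).le, fun z hz => lt_of_le_of_lt hz hcb⟩

theorem SigmaSeparatesSublevels.of_tendsto {φ : ℕ → Z → ℝ} {ψ : Z → ℝ} {β : ℕ → Ordinal}
    (hβ : ∀ k, β k < γ) (hφ : ∀ k, SigmaSeparatesSublevels (β k) (-φ k))
    (hlim : ∀ z, Tendsto (φ · z) atTop (𝓝 (ψ z))) : SigmaSeparatesSublevels γ ψ := by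
  intro γ' hγ' a b hab
  obtain ⟨c, hac, hcb⟩ := exists_between hab
  -- `S k` lies between the superlevel sets `{φ k > c}` and `{φ k > a}`.
  choose S hS hcS hSa using fun k => hφ k γ (hβ k) (-c) (-a) (neg_lt_neg hac)
  refine ⟨liminf (fun k => (S k)ᶜ) atTop,
    isSigmaClass_liminf (fun k => (hS k).isPiClass_compl) hγ', fun z hz => ?_, fun z hz => ?_⟩
  · rw [mem_liminf_iff_eventually_mem]
    filter_upwards [(hlim z).eventually_lt_const hz] with k hk hkS
    have : -φ k z < -a := hSa k hkS
    linarith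
  · have hle : ∀ᶠ k in atTop, φ k z ≤ c := by
      filter_upwards [mem_liminf_iff_eventually_mem.1 hz] with k hk
      exact not_lt.1 fun h => hk (hcS k (neg_lt_neg h))
    exact (le_of_tendsto (hlim z) hle).trans_lt hcb

theorem IsBaireClass.sigmaSeparatesSublevels {φ : Z → ℝ} (hφ : IsBaireClass γ φ) :
    SigmaSeparatesSublevels γ φ := by
  -- `-φ` is carried along because the limit step for `φ` uses the superlevel sets of the `φₖ`.
  suffices SigmaSeparatesSublevels γ φ ∧ SigmaSeparatesSublevels γ (-φ) from this.1
  induction hφ with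
  | cont φ hφ => exact ⟨hφ.sigmaSeparatesSublevels, hφ.neg.sigmaSeparatesSublevels⟩
  | lim γ φ φs β _ hβ _ hlim ih =>
    exact ⟨.of_tendsto hβ (fun k => (ih k).2) hlim,
      .of_tendsto (φ := fun k => -φs k) hβ (fun k => by rw [neg_neg]; exact (ih k).1)
        fun z => (hlim z).neg⟩

end Sublevels

section Sections

variable {X Y : Type*}

theorem tendsto_ediam_zero_of_forall_dist_lt [PseudoMetricSpace Y] {s : ℕ → Set Y} {y₀ : Y}
    (h : ∀ ε > 0, ∀ᶠ m in atTop, ∀ y ∈ s m, dist y y₀ < ε) :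
    Tendsto (fun m => ediam (s m)) atTop (𝓝 0) := by
  rw [ENNReal.tendsto_nhds_zero]
  intro ε hε
  obtain ⟨r, -, hr, hrε⟩ := ENNReal.lt_iff_exists_real_btwn.1 hε
  filter_upwards [h (r / 2) (half_pos (ENNReal.ofReal_pos.1 hr))] with m hm
  refine (ediam_le_of_forall_dist_le fun y hy z hz => ?_).trans hrε.le
  linarith [dist_triangle_right y z y₀, hm y hy, hm z hz]

theorem tendsto_ediam_zero_of_forall_dist_tail_lt [PseudoMetricSpace Y] {s : ℕ → Set Y}
    {u : ℕ → Y} {y₀ : Y} {r : ℕ → ℝ} (hu : Tendsto u atTop (𝓝 y₀)) (hr : Tendsto r atTop (𝓝 0))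
    (hs : ∀ m, ∀ y ∈ s m, ∃ n ≥ m, dist (u n) y < r m) :
    Tendsto (fun m => ediam (s m)) atTop (𝓝 0) := by
  refine tendsto_ediam_zero_of_forall_dist_lt (y₀ := y₀) fun ε hε => ?_
  obtain ⟨N, hN⟩ := Metric.tendsto_atTop.1 hu (ε / 2) (half_pos hε)
  filter_upwards [eventually_ge_atTop N, hr.eventually_lt_const (half_pos hε)] with m hm hrm y hy
  obtain ⟨n, hnm, hn⟩ := hs m y hy
  calc dist y y₀ ≤ dist (u n) y + dist (u n) y₀ := dist_triangle_left _ _ _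
    _ < ε / 2 + ε / 2 := add_lt_add (hn.trans hrm) (hN n (hm.trans hnm))
    _ = ε := add_halves ε

theorem iInter_eq_graph_of_tendsto_ediam [EMetricSpace Y] {f : X → Y} {G : ℕ → Set (X × Y)}
    (hf : ∀ n x, (x, f x) ∈ G n)
    (hG : ∀ x, Tendsto (fun n => ediam {y | (x, y) ∈ G n}) atTop (𝓝 0)) :
    ⋂ n, G n = {p | p.2 = f p.1} := by
  ext ⟨x, y⟩
  refine ⟨fun hy => ?_, by rintro (rfl : y = f x); exact mem_iInter.2 fun n => hf n x⟩
  have hy : ∀ n, (x, y) ∈ G n := mem_iInter.1 hy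
  exact edist_le_zero.1 <| ge_of_tendsto' (hG x) fun n => edist_le_ediam_of_mem (hy n) (hf n x)

end Sections

theorem baire_graph_sigmaClass_sets_general
    {X Y : Type*} [TopologicalSpace X] [MetricSpace Y]
    (α : Ordinal) (hα1 : 1 ≤ α)
    (f : X → Y) (hf : IsBaireClass α f) :
    ∃ G : ℕ → Set (X × Y),
      (∀ n, IsSigmaClass α (G n)) ∧
      (⋂ n, G n) = {p : X × Y | p.2 = f p.1} ∧
      (∀ x : X,
        Tendsto (fun n => EMetric.diam {y : Y | (x, y) ∈ G n}) atTop (𝓝 0)) := by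
  cases hf with
  | cont => exact absurd hα1 (not_le.2 zero_lt_one)
  | lim _ _ g β _ hβ hg hlim =>
    set r : ℕ → ℝ := fun m => 1 / ((m : ℝ) + 1)
    have hr : ∀ m, 0 < r m := fun m => Nat.one_div_pos_of_nat
    choose S hS hlow hup using fun m n =>
      (continuous_dist.comp_isBaireClass (hg n).prodMap_id).sigmaSeparatesSublevels
        α (hβ n) (r m / 2) (r m) (half_lt_self (hr m))
    set G : ℕ → Set (X × Y) := fun m => ⋃ k, S m (m + k)
    have hgraph : ∀ m x, (x, f x) ∈ G m := fun m x => by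
      obtain ⟨N, hN⟩ := Metric.tendsto_atTop.1 (hlim x) _ (half_pos (hr m))
      exact mem_iUnion.2 ⟨N, hlow m _ (hN _ (Nat.le_add_left N m))⟩
    have hdiam : ∀ x, Tendsto (fun m => ediam {y | (x, y) ∈ G m}) atTop (𝓝 0) := fun x =>
      tendsto_ediam_zero_of_forall_dist_tail_lt (hlim x) tendsto_one_div_add_atTop_nhds_zero_nat
        fun m y hy => by
          obtain ⟨k, hk⟩ := mem_iUnion.1 hy
          exact ⟨m + k, Nat.le_add_right m k, hup m _ hk⟩
    exact ⟨G, fun m => IsSigmaClass.iUnion_s7 fun k => hS m _,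
      iInter_eq_graph_of_tendsto_ediam hgraph hdiam, hdiam⟩

/-- If `f : X → Y` is Baire-`α` (X topological, Y metric, `α ≥ 1` a countable
ordinal), then there is a sequence of `Σ_α` sets in `X × Y` whose intersection is the graph
of `f` and whose vertical sections above each `x` have diameter tending to `0`. -/
theorem baire_graph_sigmaClass_sets
    {X Y : Type*} [TopologicalSpace X] [MetricSpace Y]
    (α : Ordinal) (hα : α.card ≤ Cardinal.aleph0) (hα1 : 1 ≤ α)
    (f : X → Y) (hf : IsBaireClass α f) :
    ∃ G : ℕ → Set (X × Y),
      (∀ n, IsSigmaClass α (G n)) ∧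
      (⋂ n, G n) = {p : X × Y | p.2 = f p.1} ∧
      (∀ x : X,
        Tendsto (fun n => EMetric.diam {y : Y | (x, y) ∈ G n}) atTop (𝓝 0)) :=
  baire_graph_sigmaClass_sets_general α hα1 f hf
end

section
/- Let X and Y be σ-compact metric spaces such that X has no isolated points. For every closed set T ⊆ X × Y there exist a countable set A ⊆ X and a function f : A → Y such that the set of accumulation points of the graph of f in X × Y equals T. -/
/-!
Enumerate a countable dense subset of `T` so that every element is repeated infinitely often;
the resulting sequence `τ` in `T` has exactly `T` as its set of cluster points. Since `X` has no
isolated points, the first coordinates of `τ` can be moved by distances tending to `0` so as to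
become pairwise distinct. The moved sequence `s` has the same cluster points as `τ`, it is the graph
of a function on the countable set of its first coordinates, and since `s` is injective its cluster
points are exactly the accumulation points of its range.
-/

open Filter Topology

/-- The set of accumulation points of a set `S` in a topological space: points `p` such that
every neighborhood of `p` meets `S` in a point other than `p`. -/
def accumulationPoints {Z : Type*} [TopologicalSpace Z] (S : Set Z) : Set Z :=
  {p : Z | AccPt p (𝓟 S)}

open Set Function

noncomputable def seqDistinctMem {X : Type*} (B : ℕ → Set X) (hB : ∀ m, (B m).Infinite) : ℕ → X
  | m => ((hB m).sdiff (finite_range fun k : Fin m => seqDistinctMem B hB k)).nonempty.some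
decreasing_by exact k.2

theorem seqDistinctMem_mem_diff {X : Type*} (B : ℕ → Set X) (hB : ∀ m, (B m).Infinite) (m : ℕ) :
    seqDistinctMem B hB m ∈ B m \ range fun k : Fin m => seqDistinctMem B hB k := by
  rw [seqDistinctMem]
  exact Nonempty.some_mem _

theorem exists_injective_forall_mem_of_infinite {X : Type*} (B : ℕ → Set X)
    (hB : ∀ m, (B m).Infinite) : ∃ g : ℕ → X, Injective g ∧ ∀ m, g m ∈ B m := by
  refine ⟨seqDistinctMem B hB, fun a b hab => ?_, fun m => (seqDistinctMem_mem_diff B hB m).1⟩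
  by_contra hne
  rcases Nat.lt_or_gt_of_ne hne with h | h
  · exact (seqDistinctMem_mem_diff B hB b).2 ⟨⟨a, h⟩, hab⟩
  · exact (seqDistinctMem_mem_diff B hB a).2 ⟨⟨b, h⟩, hab.symm⟩

theorem exists_injective_tendsto_dist_zero {X : Type*} [MetricSpace X]
    [∀ x : X, NeBot (𝓝[≠] x)] (a : ℕ → X) :
    ∃ g : ℕ → X, Injective g ∧ Tendsto (fun m => dist (g m) (a m)) atTop (𝓝 0) := by
  have hpos (m : ℕ) : (0 : ℝ) < 1 / (m + 1) := by positivity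
  obtain ⟨g, hg, hga⟩ := exists_injective_forall_mem_of_infinite
    (fun m => Metric.ball (a m) (1 / (m + 1)))
    fun m => infinite_of_mem_nhds _ (Metric.ball_mem_nhds _ (hpos m))
  exact ⟨g, hg, squeeze_zero (fun _ => dist_nonneg) (fun m => (hga m).le)
    tendsto_one_div_add_atTop_nhds_zero_nat⟩

theorem MapClusterPt.of_tendsto_dist {Z ι : Type*} [PseudoMetricSpace Z] {l : Filter ι}
    {f g : ι → Z} {p : Z} (hf : MapClusterPt p l f)
    (hfg : Tendsto (fun i => dist (f i) (g i)) l (𝓝 0)) : MapClusterPt p l g := by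
  rw [Metric.nhds_basis_ball.mapClusterPt_iff_frequently] at hf ⊢
  intro ε hε
  have hclose : ∀ᶠ i in l, dist (f i) (g i) < ε / 2 := hfg.eventually (gt_mem_nhds (by positivity))
  refine ((hf (ε / 2) (by positivity)).and_eventually hclose).mono fun i ⟨hfi, hi⟩ => ?_
  calc dist (g i) p ≤ dist (f i) (g i) + dist (f i) p := dist_triangle_left _ _ _
    _ < ε / 2 + ε / 2 := add_lt_add hi hfi
    _ = ε := add_halves ε

theorem mapClusterPt_iff_of_tendsto_dist {Z ι : Type*} [PseudoMetricSpace Z] {l : Filter ι}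
    {f g : ι → Z} {p : Z} (hfg : Tendsto (fun i => dist (f i) (g i)) l (𝓝 0)) :
    MapClusterPt p l f ↔ MapClusterPt p l g :=
  ⟨fun hf => hf.of_tendsto_dist hfg,
    fun hg => hg.of_tendsto_dist (by simpa only [dist_comm] using hfg)⟩

theorem accPt_range_iff_mapClusterPt {Z : Type*} [TopologicalSpace Z] [T1Space Z] {s : ℕ → Z}
    (hs : Injective s) {p : Z} : AccPt p (𝓟 (range s)) ↔ MapClusterPt p atTop s := by
  rw [mapClusterPt_iff_frequently]
  constructor
  · intro hp U hU
    have hUs : (s '' (s ⁻¹' U)).Infinite := by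
      rw [image_preimage_eq_inter_range]
      exact Infinite.of_accPt (hp.nhds_inter hU)
    exact Nat.frequently_atTop_iff_infinite.2 hUs.of_image
  · intro hp
    rw [accPt_iff_nhds]
    intro U hU
    have hne : ∀ᶠ m in atTop, s m ≠ p :=
      (Nat.cofinite_eq_atTop ▸ hs.tendsto_cofinite).eventually (eventually_cofinite_ne p)
    obtain ⟨m, hmU, hmp⟩ := ((hp U hU).and_eventually hne).exists
    exact ⟨s m, ⟨hmU, mem_range_self m⟩, hmp⟩

theorem exists_seq_setOf_mapClusterPt_eq_closure {Z : Type*} [TopologicalSpace Z] {D : Set Z}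
    (hD : D.Countable) (hD_ne : D.Nonempty) :
    ∃ τ : ℕ → Z, {p | MapClusterPt p atTop τ} = closure D := by
  obtain ⟨u, rfl⟩ := hD.exists_eq_range hD_ne
  refine ⟨fun m : ℕ => u (Nat.unpair m).1, Subset.antisymm (fun p hp => ?_) ?_⟩
  · exact isClosed_closure.mem_of_mapClusterPt hp
      (Eventually.of_forall fun m => subset_closure (mem_range_self _))
  · refine closure_minimal ?_ isClosed_setOfPred_clusterPt
    rintro _ ⟨n, rfl⟩
    have hrec : ∃ᶠ m in atTop, u (Nat.unpair m).1 = u n :=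
      frequently_atTop.2 fun k => ⟨Nat.pair n k, Nat.right_le_pair n k, by simp⟩
    exact mapClusterPt_iff_frequently.2 fun U hU =>
      hrec.mono fun m hm => hm ▸ mem_of_mem_nhds hU

theorem exists_graph_eq_range {ι X Y : Type*} {g : ι → X} (hg : Injective g) (y : ι → Y) :
    ∃ f : range g → Y,
      {q : X × Y | ∃ h : q.1 ∈ range g, f ⟨q.1, h⟩ = q.2} = range fun i => (g i, y i) := by
  refine ⟨y ∘ (Equiv.ofInjective g hg).symm, Subset.antisymm ?_ ?_⟩
  · rintro ⟨x, z⟩ ⟨hx, hz⟩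
    exact ⟨_, Prod.ext (Equiv.apply_ofInjective_symm hg ⟨x, hx⟩) hz⟩
  · rintro _ ⟨i, rfl⟩
    exact ⟨mem_range_self i, by simp⟩

/-- Let `X` and `Y` be σ-compact metric spaces, `X` without isolated points.
For every closed `T ⊆ X × Y` there are a countable `A ⊆ X` and a function `f : A → Y` whose
graph has accumulation set exactly `T`. -/
theorem exists_countable_graph_accumulation_eq_closed
    {X Y : Type*} [MetricSpace X] [MetricSpace Y]
    [SigmaCompactSpace X] [SigmaCompactSpace Y]
    (hX : ∀ x : X, Filter.NeBot (𝓝[≠] x))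
    (T : Set (X × Y)) (hT : IsClosed T) :
    ∃ A : Set X, A.Countable ∧ ∃ f : A → Y,
      accumulationPoints {q : X × Y | ∃ h : q.1 ∈ A, f ⟨q.1, h⟩ = q.2} = T := by
  rcases T.eq_empty_or_nonempty with rfl | hT_ne
  · refine ⟨∅, countable_empty, isEmptyElim, ?_⟩
    simp [accumulationPoints, AccPt, eq_empty_iff_forall_notMem]
  obtain ⟨D, hDT, hD, hTD⟩ :=
    (TopologicalSpace.IsSeparable.of_separableSpace T).exists_countable_dense_subset
  have hD_closure : closure D = T := (closure_minimal hDT hT).antisymm hTD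
  obtain ⟨τ, hτ⟩ := exists_seq_setOf_mapClusterPt_eq_closure hD
    (closure_nonempty_iff.1 (hD_closure ▸ hT_ne))
  obtain ⟨g, hg, hgτ⟩ := exists_injective_tendsto_dist_zero (fun m => (τ m).1)
  obtain ⟨f, hf⟩ := exists_graph_eq_range hg fun m => (τ m).2
  have hsτ : Tendsto (fun m => dist (g m, (τ m).2) (τ m)) atTop (𝓝 0) := by
    simpa only [Prod.dist_eq, dist_self, max_eq_left dist_nonneg] using hgτ
  refine ⟨range g, countable_range g, f, ?_⟩
  ext p
  rw [hf, accumulationPoints, mem_ofPred_eq, accPt_range_iff_mapClusterPt fun _ _ h => hg (congrArg Prod.fst h),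
    mapClusterPt_iff_of_tendsto_dist hsτ, ← hD_closure, ← hτ, mem_ofPred_eq]
end

section
/- Let X be a σ-compact metrizable Suslin space with no isolated points, Y a σ-compact but not compact Fréchet space, and f : X → Y any function. Then L_f is closed and there exists a countable set D ⊆ X such that L_f ∩ ({x} × Y) ≠ ∅ for every x ∈ X \ D. -/
/-!
Accumulation points of any set in a T₁ space form a closed set, so `L_f` is closed. Cover `Y` by
compact sets `K n`. In the second-countable space `X`, each `f ⁻¹' K n` has only countably many
isolated points; let `D` collect them. If `x ∉ D` and `f x ∈ K n`, then `x` is an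
accumulation point of `f ⁻¹' K n`, and a cluster point `y ∈ K n` of `f` along
`𝓝[≠] x ⊓ 𝓟 (f ⁻¹' K n)` makes `(x, y)` an accumulation point of the graph.
-/

open Filter Topology

/-- The graph of `f : X → Y` as a subset of `X × Y`. -/
def graphSet {X Y : Type*} (f : X → Y) : Set (X × Y) :=
  {p : X × Y | p.2 = f p.1}

open Set

lemma countable_setOf_not_accPt {X : Type*} [TopologicalSpace X] [HereditarilyLindelofSpace X]
    (A : Set X) : {x ∈ A | ¬AccPt x (𝓟 A)}.Countable := by
  refine (HereditarilyLindelofSpace.isLindelof _).countable (discreteTopology_of_noAccPts ?_)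
  exact fun x hx hacc => hx.2 (hacc.mono (principal_mono.2 fun _ h => h.1))

lemma exists_mem_accumulationPoints_graphSet_of_accPt_preimage {X Y : Type*}
    [TopologicalSpace X] [TopologicalSpace Y] {f : X → Y} {K : Set Y} (hK : IsCompact K)
    {x : X} (hx : AccPt x (𝓟 (f ⁻¹' K))) :
    ∃ y ∈ K, (x, y) ∈ accumulationPoints (graphSet f) := by
  set F := 𝓝[≠] x ⊓ 𝓟 (f ⁻¹' K)
  have : F.NeBot := hx
  obtain ⟨y, hyK, hy⟩ := hK (f := map f F)
    (tendsto_principal.2 <| mem_inf_of_right <| mem_principal_self _)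
  refine ⟨y, hyK, accPt_iff_nhds.2 fun U hU => ?_⟩
  obtain ⟨u, hu, v, hv, huv⟩ := mem_nhds_prod_iff.1 hU
  have hnear : ∀ᶠ z in F, z ∈ u ∧ z ≠ x :=
    mem_inf_of_left <| mem_of_superset (inter_mem_nhdsWithin {x}ᶜ hu) fun _ h => ⟨h.2, h.1⟩
  obtain ⟨z, hzv, hzu, hzx⟩ :=
    ((mapClusterPt_iff_frequently.1 hy v hv).and_eventually hnear).exists
  exact ⟨(z, f z), ⟨huv ⟨hzu, hzv⟩, rfl⟩, fun h => hzx (congrArg Prod.fst h)⟩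

theorem accumulation_closed_and_sections_nonempty_sigmaCompact_general
    {X Y : Type*} [TopologicalSpace X] [TopologicalSpace.MetrizableSpace X]
    [SigmaCompactSpace X]
    [MetricSpace Y]
    [SigmaCompactSpace Y]
    (f : X → Y) :
    IsClosed (accumulationPoints (graphSet f)) ∧
      ∃ D : Set X, D.Countable ∧
        ∀ x : X, x ∉ D → ∃ y : Y, (x, y) ∈ accumulationPoints (graphSet f) := by
  set A : ℕ → Set X := fun n => f ⁻¹' compactCovering Y n
  refine ⟨isClosed_derivedSet _, ⋃ n, {x ∈ A n | ¬AccPt x (𝓟 (A n))},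
    countable_iUnion fun n => countable_setOf_not_accPt (A n), fun x hxD => ?_⟩
  obtain ⟨n, hn⟩ := exists_mem_compactCovering (f x)
  have hacc : AccPt x (𝓟 (A n)) := by_contra fun h => hxD (mem_iUnion.2 ⟨n, hn, h⟩)
  obtain ⟨y, -, hy⟩ :=
    exists_mem_accumulationPoints_graphSet_of_accPt_preimage (isCompact_compactCovering Y n) hacc
  exact ⟨y, hy⟩

/-- Let `X` be a σ-compact metrizable Suslin space with no isolated points,
`Y` a σ-compact but not compact Fréchet space, and `f : X → Y` any function. Then `L_f` is
closed and there is a countable `D ⊆ X` such that `L_f` meets every vertical line `{x} × Y`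
with `x ∉ D`. -/
theorem accumulation_closed_and_sections_nonempty_sigmaCompact
    {X Y : Type*} [TopologicalSpace X] [TopologicalSpace.MetrizableSpace X]
    [SigmaCompactSpace X]
    (hXs : ∃ (Z : Type) (_ : TopologicalSpace Z) (_ : PolishSpace Z) (g : Z → X),
      Continuous g ∧ Function.Surjective g)
    (hXi : ∀ x : X, Filter.NeBot (𝓝[≠] x))
    [AddCommGroup Y] [Module ℝ Y] [MetricSpace Y]
    [IsTopologicalAddGroup Y] [ContinuousSMul ℝ Y] [LocallyConvexSpace ℝ Y]
    [CompleteSpace Y] [SigmaCompactSpace Y]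
    (hYnc : ¬ CompactSpace Y)
    (hinv : ∀ a x y : Y, dist (a + x) (a + y) = dist x y)
    (f : X → Y) :
    IsClosed (accumulationPoints (graphSet f)) ∧
      ∃ D : Set X, D.Countable ∧
        ∀ x : X, x ∉ D → ∃ y : Y, (x, y) ∈ accumulationPoints (graphSet f) :=
  accumulation_closed_and_sections_nonempty_sigmaCompact_general f
end
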